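/- Let σ ∈ (1/2, 1). Then for every ξ ∈ ℝ with |ξ| ≤ 1/2, p_1(ξ) ≤ σ(2σ−1) · 2^{2−2σ} · ξ²; consequently p_1(ξ) ≤ σ(2σ−1)|ξ|^{2σ} for |ξ| ≤ 1/2. -/

import Mathlib

open Real

/-! With `K = σ(2σ−1)2^{2−2σ}`, the function `g ξ = K ξ² − p₁(ξ)` vanishes to second order at
`0`, and `g'' = 2K − 2σ(2σ−1)(1+ξ)^{2σ−2} ≥ 0` on `[-1/2, ∞)` because `(1+ξ)^{2σ−2}` is
decreasing there with value `2^{2−2σ}` at `-1/2`. So `g` is convex with a critical point at `0`,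
hence nonnegative. The second bound follows from `(2|ξ|)^{2−2σ} ≤ 1`. -/

/-- The symbol `p₁(ξ) = |ξ+1|^{2σ} − 1 − 2σξ`. -/
noncomputable def pOne (σ : ℝ) (ξ : ℝ) : ℝ := |ξ + 1| ^ (2*σ) - 1 - 2*σ*ξ

open Set

theorem ConvexOn.le_of_hasDerivAt_eq_zero {S : Set ℝ} {f : ℝ → ℝ} {x₀ y : ℝ}
    (hf : ConvexOn ℝ S f) (hx₀ : x₀ ∈ S) (hy : y ∈ S) (hd : HasDerivAt f 0 x₀) :
    f x₀ ≤ f y := by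
  rcases lt_trichotomy x₀ y with hlt | rfl | hgt
  · have := hf.le_slope_of_hasDerivAt hx₀ hy hlt hd
    rw [slope_def_field, le_div_iff₀ (sub_pos.2 hlt)] at this
    linarith
  · rfl
  · have := hf.slope_le_of_hasDerivAt hy hx₀ hgt hd
    rw [slope_def_field, div_le_iff₀ (sub_pos.2 hgt)] at this
    linarith

section OneAddRpow

variable {p : ℝ}

theorem hasDerivAt_one_add_rpow {x : ℝ} (h : 1 + x ≠ 0 ∨ 1 ≤ p) :
    HasDerivAt (fun x : ℝ => (1 + x) ^ p) (p * (1 + x) ^ (p - 1)) x := by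
  simpa using ((hasDerivAt_id x).const_add 1).rpow_const h

theorem one_add_rpow_le_two_rpow_neg (hp : p ≤ 0) {x : ℝ} (hx : -(1/2) ≤ x) :
    (1 + x) ^ p ≤ 2 ^ (-p) := by
  rw [rpow_neg zero_le_two, ← inv_rpow zero_le_two]
  exact rpow_le_rpow_of_nonpos (by norm_num) (by linarith) hp

theorem hasDerivAt_sq_sub_one_add_rpow (hp : 1 ≤ p) (K x : ℝ) :
    HasDerivAt (fun x : ℝ => K * x ^ 2 - ((1 + x) ^ p - 1 - p * x))
      (2 * K * x - (p * (1 + x) ^ (p - 1) - p)) x := by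
  refine (((hasDerivAt_pow 2 x).const_mul K).sub (((hasDerivAt_one_add_rpow (Or.inr hp)).sub_const
    1).sub ((hasDerivAt_id x).const_mul p))).congr_deriv ?_
  push_cast
  ring

-- `p(p−1)2^{2−p}/2` is the maximum of `f''/2` on `[-1/2, ∞)` for `f x = (1+x)^p`.
theorem convexOn_sq_sub_one_add_rpow (hp1 : 1 ≤ p) (hp2 : p ≤ 2) :
    ConvexOn ℝ (Ici (-(1/2)))
      (fun x : ℝ => p * (p - 1) / 2 * 2 ^ (2 - p) * x ^ 2 - ((1 + x) ^ p - 1 - p * x)) := by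
  set K : ℝ := p * (p - 1) / 2 * 2 ^ (2 - p)
  have hderiv2 : ∀ x ∈ interior (Ici (-(1/2) : ℝ)),
      HasDerivAt (fun x : ℝ => 2 * K * x - (p * (1 + x) ^ (p - 1) - p))
        (2 * K - p * ((p - 1) * (1 + x) ^ (p - 1 - 1))) x := by
    intro x hx
    rw [interior_Ici, mem_Ioi] at hx
    refine (((hasDerivAt_id x).const_mul (2 * K)).sub (((hasDerivAt_one_add_rpow
      (Or.inl (by linarith))).const_mul p).sub_const p)).congr_deriv ?_
    ring
  have hsecond : ∀ x ∈ interior (Ici (-(1/2) : ℝ)),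
      0 ≤ 2 * K - p * ((p - 1) * (1 + x) ^ (p - 1 - 1)) := by
    intro x hx
    rw [interior_Ici, mem_Ioi] at hx
    have hle : (1 + x) ^ (p - 1 - 1) ≤ 2 ^ (2 - p) := by
      simpa [sub_sub, one_add_one_eq_two] using
        one_add_rpow_le_two_rpow_neg (p := p - 2) (by linarith) hx.le
    have := mul_le_mul_of_nonneg_left hle (mul_nonneg (by linarith : 0 ≤ p) (by linarith : 0 ≤ p - 1))
    simp only [K]
    linarith
  exact convexOn_of_hasDerivWithinAt2_nonneg (convex_Ici _)
    (fun x _ => (hasDerivAt_sq_sub_one_add_rpow hp1 K x).continuousAt.continuousWithinAt)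
    (fun x _ => (hasDerivAt_sq_sub_one_add_rpow hp1 K x).hasDerivWithinAt)
    (fun x hx => (hderiv2 x hx).hasDerivWithinAt) hsecond

theorem one_add_rpow_sub_le (hp1 : 1 ≤ p) (hp2 : p ≤ 2) {x : ℝ} (hx : -(1/2) ≤ x) :
    (1 + x) ^ p - 1 - p * x ≤ p * (p - 1) / 2 * 2 ^ (2 - p) * x ^ 2 := by
  have hcrit := hasDerivAt_sq_sub_one_add_rpow hp1 (p * (p - 1) / 2 * 2 ^ (2 - p)) 0
  simp only [mul_zero, add_zero, one_rpow, mul_one, sub_self] at hcrit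
  have h := (convexOn_sq_sub_one_add_rpow hp1 hp2).le_of_hasDerivAt_eq_zero
    (by norm_num : (0 : ℝ) ∈ Ici (-(1/2))) hx hcrit
  norm_num at h
  linarith

end OneAddRpow

theorem two_rpow_mul_sq_le_abs_rpow {q x : ℝ} (hq : q ≤ 2) (hx : |x| ≤ 1/2) :
    2 ^ (2 - q) * x ^ 2 ≤ |x| ^ q := by
  have hsplit : x ^ 2 = |x| ^ q * |x| ^ (2 - q) := by
    rw [← rpow_add' (abs_nonneg x) (by norm_num), add_sub_cancel, rpow_two, sq_abs]
  have hsmall : (2 * |x|) ^ (2 - q) ≤ 1 :=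
    rpow_le_one (by positivity) (by linarith) (by linarith)
  rw [mul_rpow zero_le_two (abs_nonneg x)] at hsmall
  calc 2 ^ (2 - q) * x ^ 2 = (2 ^ (2 - q) * |x| ^ (2 - q)) * |x| ^ q := by rw [hsplit]; ring
    _ ≤ 1 * |x| ^ q := by gcongr
    _ = |x| ^ q := one_mul _

/-- For `|ξ| ≤ 1/2` one has `p₁(ξ) ≤ σ(2σ−1)2^{2−2σ}ξ²`, hence `p₁(ξ) ≤ σ(2σ−1)|ξ|^{2σ}`. -/
theorem pOne_low_freq_bound (σ : ℝ) (hσ : σ ∈ Set.Ioo (1/2 : ℝ) 1) :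
    ∀ ξ : ℝ, |ξ| ≤ 1/2 →
      pOne σ ξ ≤ σ*(2*σ - 1) * (2 : ℝ) ^ (2 - 2*σ) * ξ ^ 2 ∧
      pOne σ ξ ≤ σ*(2*σ - 1) * |ξ| ^ (2*σ) := by
  obtain ⟨hσ1, hσ2⟩ := hσ
  intro ξ hξ
  have hξ1 : -(1/2) ≤ ξ := neg_le_of_abs_le hξ
  have hquad : pOne σ ξ ≤ σ*(2*σ - 1) * (2 : ℝ) ^ (2 - 2*σ) * ξ ^ 2 := by
    have h := one_add_rpow_sub_le (p := 2*σ) (by linarith) (by linarith) hξ1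
    rw [pOne, abs_of_pos (by linarith), add_comm]
    linarith
  refine ⟨hquad, hquad.trans ?_⟩
  rw [mul_assoc]
  have : 0 ≤ σ*(2*σ - 1) := mul_nonneg (by linarith) (by linarith)
  gcongr
  exact two_rpow_mul_sq_le_abs_rpow (by linarith) hξ
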